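/- arXiv:2410.00019 — 4 statements merged into one kernel-verified Lean document; each statement's English description precedes it below -/
import Mathlib

section
/- For every natural number n and q > 0, the Elzaki transform of τ^n equals n!·q^{n+2}. -/
open Real MeasureTheory

open scoped Nat in
theorem integral_pow_mul_exp_neg_mul_Ioi {r : ℝ} (hr : 0 < r) (n : ℕ) :
    ∫ t in Set.Ioi (0 : ℝ), t ^ n * exp (-(r * t)) = n ! / r ^ (n + 1) := by
  have h := integral_rpow_mul_exp_neg_mul_Ioi (a := (n : ℝ) + 1) (by positivity) hr
  rw [add_sub_cancel_right, Gamma_nat_eq_factorial, one_div, inv_rpow hr.le, ← Nat.cast_succ] at h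
  simp only [rpow_natCast] at h
  rw [h, div_eq_inv_mul]

/-- The Elzaki transform of `τ^n` is `n!·q^{n+2}`. -/
theorem elzaki_of_pow (n : ℕ) (q : ℝ) (hq : 0 < q) :
    q * ∫ τ in Set.Ioi (0 : ℝ), τ ^ n * Real.exp (-τ / q)
      = (n.factorial : ℝ) * q ^ (n + 2) := by
  have hexp (τ : ℝ) : -τ / q = -(q⁻¹ * τ) := by ring
  simp_rw [hexp, integral_pow_mul_exp_neg_mul_Ioi (inv_pos.mpr hq), inv_pow, div_inv_eq_mul]
  ring
end

section
/- If f is differentiable with f and f' of exponential order, then for q > 0, E[f'](q) = (1/q)·E[f](q) − q·f(0). -/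
/-!
Since `E[f](q) = q · ∫₀^∞ f(τ) e^{-τ/q} dτ`, this is the Laplace-transform rule for derivatives at
`s = 1/q`. The product `f(τ) e^{-sτ}` has derivative `f'(τ) e^{-sτ} - s f(τ) e^{-sτ}`, and both terms
are integrable and the product tends to `0` at infinity because `f`, `f'` grow at most like `e^{cτ}`
with `c < s`, so the fundamental theorem of calculus on `(0, ∞)` applies.
-/

open Real MeasureTheory Filter Set Asymptotics Topology

section ExponentialOrder

variable {h : ℝ → ℝ} {G c s : ℝ}

theorem isBigO_mul_exp_neg (hb : ∀ τ, 0 ≤ τ → |h τ| ≤ G * exp (c * τ)) :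
    (fun τ => h τ * exp (-s * τ)) =O[atTop] fun τ => exp (-(s - c) * τ) := by
  refine IsBigO.of_bound G ?_
  filter_upwards [eventually_ge_atTop 0] with τ hτ
  calc ‖h τ * exp (-s * τ)‖ = |h τ| * exp (-s * τ) := by
        rw [norm_mul, norm_eq_abs, norm_of_nonneg (exp_pos _).le]
    _ ≤ G * exp (c * τ) * exp (-s * τ) := by gcongr; exact hb τ hτ
    _ = G * ‖exp (-(s - c) * τ)‖ := by
        rw [norm_of_nonneg (exp_pos _).le, mul_assoc, ← exp_add]; ring_nf

theorem integrableOn_mul_exp_neg_Ioi (hc : c < s) (hh : Continuous h)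
    (hb : ∀ τ, 0 ≤ τ → |h τ| ≤ G * exp (c * τ)) :
    IntegrableOn (fun τ => h τ * exp (-s * τ)) (Ioi 0) :=
  integrable_of_isBigO_exp_neg (sub_pos.2 hc) (by fun_prop) (isBigO_mul_exp_neg hb)

theorem tendsto_mul_exp_neg_atTop (hc : c < s) (hb : ∀ τ, 0 ≤ τ → |h τ| ≤ G * exp (c * τ)) :
    Tendsto (fun τ => h τ * exp (-s * τ)) atTop (𝓝 0) :=
  (isBigO_mul_exp_neg hb).trans_tendsto <|
    tendsto_exp_atBot.comp <| tendsto_id.const_mul_atTop_of_neg (by linarith)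

end ExponentialOrder

theorem hasDerivAt_mul_exp_neg {f : ℝ → ℝ} {s x : ℝ} (hf : DifferentiableAt ℝ f x) :
    HasDerivAt (fun τ => f τ * exp (-s * τ))
      (deriv f x * exp (-s * x) - s * (f x * exp (-s * x))) x := by
  have he : HasDerivAt (fun τ => exp (-s * τ)) (exp (-s * x) * -s) x := by
    simpa using ((hasDerivAt_id x).const_mul (-s)).exp
  exact (hf.hasDerivAt.mul he).congr_deriv (by ring)

theorem integral_deriv_mul_exp_neg {f : ℝ → ℝ} {G c s : ℝ} (hc : c < s)
    (hdiff : Differentiable ℝ f) (hcont : Continuous (deriv f))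
    (hf : ∀ τ, 0 ≤ τ → |f τ| ≤ G * exp (c * τ))
    (hf' : ∀ τ, 0 ≤ τ → |deriv f τ| ≤ G * exp (c * τ)) :
    ∫ τ in Ioi 0, deriv f τ * exp (-s * τ)
      = s * (∫ τ in Ioi 0, f τ * exp (-s * τ)) - f 0 := by
  have hint' := integrableOn_mul_exp_neg_Ioi hc hcont hf'
  have hint := integrableOn_mul_exp_neg_Ioi hc hdiff.continuous hf
  have hftc := integral_Ioi_of_hasDerivAt_of_tendsto'
    (fun x _ => hasDerivAt_mul_exp_neg (s := s) (hdiff x)) (hint'.sub (hint.const_mul s))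
    (tendsto_mul_exp_neg_atTop hc hf)
  rw [integral_sub hint' (hint.const_mul s), integral_const_mul] at hftc
  simp only [mul_zero, exp_zero, mul_one] at hftc
  linarith

/-- Elzaki transform of the derivative: `E[f'](q) = (1/q)·E[f](q) − q·f(0)`
for `f` continuously differentiable of exponential order (along with `f'`). -/
theorem elzaki_of_deriv (f : ℝ → ℝ) (q G c : ℝ) (hq : 0 < q)
    (hdiff : Differentiable ℝ f) (hcont : Continuous (deriv f))
    (hc : c < 1 / q)
    (hf : ∀ τ, 0 ≤ τ → |f τ| ≤ G * Real.exp (c * τ))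
    (hf' : ∀ τ, 0 ≤ τ → |deriv f τ| ≤ G * Real.exp (c * τ)) :
    q * ∫ τ in Set.Ioi (0 : ℝ), deriv f τ * Real.exp (-τ / q)
      = (1 / q) * (q * ∫ τ in Set.Ioi (0 : ℝ), f τ * Real.exp (-τ / q)) - q * f 0 := by
  have hkernel : ∀ τ, -τ / q = -(1 / q) * τ := fun τ => by ring
  simp only [hkernel, integral_deriv_mul_exp_neg hc hdiff hcont hf hf']
  field_simp
end

section
/- The function w(n,τ) = (1+τ)²·e^{-(1+τ)n} solves the collisional breakage equation ∂w/∂τ = ∫₀^∞∫_n^∞ ερ·(2/ε)·w(ε,τ)w(ρ,τ) dε dρ − ∫₀^∞ nε·w(n,τ)w(ε,τ) dε with initial condition w(n,0) = e^{-n}, for all n > 0 and τ ≥ 0. -/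
/-!
Write `a = 1 + τ`, so that `w(·, τ) = a² e^{-a·}`. The gain integrand `ερ(2/ε) w(ε) w(ρ)` is
`2ρ w(ε) w(ρ)`, so the gain term splits into `2 ∫_n^∞ w · ∫_0^∞ ρ w(ρ) dρ = 2 · a e^{-an} · 1`,
while the loss term is `n w(n) ∫_0^∞ ε w(ε) dε = n a² e^{-an}`. Their difference
`(2a - n a²) e^{-an}` is exactly `∂τ (a² e^{-an})`.
-/

open Real MeasureTheory Set

lemma integral_exp_neg_mul_Ioi {a : ℝ} (ha : 0 < a) (c : ℝ) :
    ∫ x in Ioi c, exp (-a * x) = exp (-a * c) / a := by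
  simpa [neg_div_neg_eq] using integral_exp_mul_Ioi (neg_neg_of_pos ha) c

lemma integral_mul_exp_neg_mul_Ioi_zero {a : ℝ} (ha : 0 < a) :
    ∫ x in Ioi 0, x * exp (-a * x) = 1 / a ^ 2 := by
  have h := integral_rpow_mul_exp_neg_mul_Ioi two_pos ha
  rw [show (2 : ℝ) - 1 = 1 by norm_num, Gamma_two, mul_one, rpow_two, one_div_pow] at h
  simpa only [rpow_one, neg_mul] using h

lemma breakage_gain_eq_mul (f : ℝ → ℝ) {n : ℝ} (hn : 0 ≤ n) :
    ∫ ρ in Ioi 0, ∫ ε in Ioi n, ε * ρ * (2 / ε) * f ε * f ρ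
      = 2 * (∫ ε in Ioi n, f ε) * ∫ ρ in Ioi 0, ρ * f ρ := by
  have inner (ρ : ℝ) : ∫ ε in Ioi n, ε * ρ * (2 / ε) * f ε * f ρ
      = 2 * ρ * f ρ * ∫ ε in Ioi n, f ε := by
    rw [← integral_const_mul]
    refine setIntegral_congr_fun measurableSet_Ioi fun ε hε => ?_
    have : ε ≠ 0 := (hn.trans_lt hε).ne'
    field_simp
  simp_rw [inner]
  rw [← integral_const_mul]
  congr 1 with ρ
  ring

lemma collision_loss_eq_mul (f : ℝ → ℝ) (n c : ℝ) :
    ∫ ε in Ioi c, n * ε * f n * f ε = n * f n * ∫ ε in Ioi c, ε * f ε := by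
  rw [← integral_const_mul]
  congr 1 with ε
  ring

lemma hasDerivAt_sq_mul_exp (n τ : ℝ) :
    HasDerivAt (fun t => (1 + t) ^ 2 * exp (-(1 + t) * n))
      (2 * (1 + τ) * exp (-(1 + τ) * n) - n * (1 + τ) ^ 2 * exp (-(1 + τ) * n)) τ := by
  have h1 : HasDerivAt (fun t : ℝ => 1 + t) 1 τ := (hasDerivAt_id τ).const_add 1
  refine ((h1.pow 2).mul (h1.neg.mul_const n).exp).congr_deriv ?_
  simp only [Pi.neg_apply, Pi.pow_apply, Nat.cast_ofNat, Nat.add_one_sub_one, pow_one]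
  ring

/-- `w(n,τ) = (1+τ)²·e^{-(1+τ)n}` solves the collisional breakage equation with
collision kernel `μ(n,ε) = nε` and binary breakage kernel `α(n,ε,ρ) = 2/ε`,
with initial condition `w(n,0) = e^{-n}`. -/
theorem exact_solution_CBE
    (w : ℝ → ℝ → ℝ)
    (hw : ∀ n τ, w n τ = (1 + τ) ^ 2 * Real.exp (-(1 + τ) * n)) :
    (∀ n : ℝ, 0 < n → ∀ τ : ℝ, 0 ≤ τ →
      HasDerivAt (fun t => w n t)
        ((∫ ρ in Set.Ioi (0 : ℝ), ∫ ε in Set.Ioi n,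
            ε * ρ * (2 / ε) * w ε τ * w ρ τ)
          - ∫ ε in Set.Ioi (0 : ℝ), n * ε * w n τ * w ε τ) τ) ∧
    (∀ n : ℝ, 0 < n → w n 0 = Real.exp (-n)) := by
  refine ⟨fun n hn τ hτ => ?_, fun n _ => by simp [hw]⟩
  have ha : 0 < 1 + τ := by linarith
  have first_moment : ∫ ε in Ioi 0, ε * w ε τ = 1 := by
    simp_rw [hw, mul_left_comm _ ((1 + τ) ^ 2)]
    rw [integral_const_mul, integral_mul_exp_neg_mul_Ioi_zero ha]
    field_simp
  have tail_mass : ∫ ε in Ioi n, w ε τ = (1 + τ) * exp (-(1 + τ) * n) := by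
    simp_rw [hw]
    rw [integral_const_mul, integral_exp_neg_mul_Ioi ha]
    field_simp
  rw [breakage_gain_eq_mul (w · τ) hn.le, collision_loss_eq_mul (w · τ),
    first_moment, tail_mass]
  simp_rw [hw]
  convert hasDerivAt_sq_mul_exp n τ using 1
  ring
end

section
/- The series ∑_{k=0}^∞ ((−1)^k/k!)·e^{-n}·τ^k·(n^k − 2k·n^{k−1} + k(k−1)·n^{k−2}) converges to (1+τ)²·e^{-(1+τ)n} for all n > 0 and τ ≥ 0. -/
/-!
Writing `y = -τ`, the `k`-th term is `e^{-n}` times `y^k/k! · (1 - d/dn)² nᵏ`, and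
`(1 - d/dn)² nᵏ = n^k - 2 k n^{k-1} + k(k-1) n^{k-2}`. Each of the three pieces is a shifted
exponential series, since
`y^k/k! · k(k-1)⋯(k-m+1) n^{k-m} = y^m (y n)^{k-m}/(k-m)!`, so the sum is
`e^{-n} (1 - 2y + y²) e^{y n} = (1 + τ)² e^{-(1+τ) n}`.
-/

open Real Nat

theorem Real.hasSum_descFactorial_mul_pow_sub (m : ℕ) (y x : ℝ) :
    HasSum (fun k : ℕ => y ^ k / k ! * (k.descFactorial m * x ^ (k - m)))
      (y ^ m * exp (y * x)) := by
  rw [← hasSum_nat_add_iff' m]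
  have hinitial : ∑ k ∈ Finset.range m, y ^ k / k ! * (k.descFactorial m * x ^ (k - m)) = 0 :=
    Finset.sum_eq_zero fun k hk => by
      simp [descFactorial_eq_zero_iff_lt.mpr (Finset.mem_range.mp hk)]
  rw [hinitial, sub_zero, exp_eq_exp_ℝ]
  refine ((NormedSpace.expSeries_div_hasSum_exp (y * x)).mul_left (y ^ m)).congr_fun fun k => ?_
  have hfact : ((k + m) ! : ℝ) = k ! * (k + m).descFactorial m := by
    rw [← factorial_mul_descFactorial (le_add_self), Nat.add_sub_cancel, cast_mul]
  have hk : (k ! : ℝ) ≠ 0 := cast_ne_zero.mpr (factorial_ne_zero k)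
  have hd : ((k + m).descFactorial m : ℝ) ≠ 0 :=
    cast_ne_zero.mpr (descFactorial_eq_zero_iff_lt.not.mpr (by omega))
  rw [hfact, Nat.add_sub_cancel, pow_add, mul_pow]
  field_simp

theorem Real.hasSum_pow_div_factorial_mul_one_sub_deriv_sq_pow (y x : ℝ) :
    HasSum (fun k : ℕ => y ^ k / k ! * (x ^ k - 2 * k * x ^ (k - 1) + k * (k - 1) * x ^ (k - 2)))
      ((1 - y) ^ 2 * exp (y * x)) := by
  have h0 := hasSum_descFactorial_mul_pow_sub 0 y x
  have h1 := hasSum_descFactorial_mul_pow_sub 1 y x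
  have h2 := hasSum_descFactorial_mul_pow_sub 2 y x
  simp only [descFactorial_zero, descFactorial_one, cast_descFactorial_two, cast_one, one_mul,
    Nat.sub_zero, pow_zero, pow_one] at h0 h1 h2
  have hvalue : (1 - y) ^ 2 * exp (y * x)
      = exp (y * x) - 2 * (y * exp (y * x)) + y ^ 2 * exp (y * x) := by
    ring
  rw [hvalue]
  exact ((h0.sub (h1.mul_left 2)).add h2).congr_fun fun k => by ring

theorem epdtm_series_converges_general (n τ : ℝ) :
    HasSum
      (fun k : ℕ => ((-1 : ℝ) ^ k / k.factorial) * Real.exp (-n) * τ ^ k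
        * (n ^ k - 2 * k * n ^ (k - 1) + k * (k - 1) * n ^ (k - 2)))
      ((1 + τ) ^ 2 * Real.exp (-(1 + τ) * n)) := by
  have key := (hasSum_pow_div_factorial_mul_one_sub_deriv_sq_pow (-τ) n).mul_left (exp (-n))
  rw [mul_left_comm, ← exp_add, sub_neg_eq_add, show -n + -τ * n = -(1 + τ) * n by ring] at key
  exact key.congr_fun fun k => by
    rw [neg_pow]
    ring

/-- The EPDTM series `∑ₖ ((−1)^k/k!) e^{-n} τ^k (n^k − 2k n^{k−1} + k(k−1) n^{k−2})`
converges to the exact solution `(1+τ)²·e^{-(1+τ)n}`. -/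
theorem epdtm_series_converges (n τ : ℝ) (hn : 0 < n) (hτ : 0 ≤ τ) :
    HasSum
      (fun k : ℕ => ((-1 : ℝ) ^ k / k.factorial) * Real.exp (-n) * τ ^ k
        * (n ^ k - 2 * k * n ^ (k - 1) + k * (k - 1) * n ^ (k - 2)))
      ((1 + τ) ^ 2 * Real.exp (-(1 + τ) * n)) :=
  epdtm_series_converges_general n τ
end
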